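/- Suppose Σ_P + λ M^{−1} ⪰ (1/2)(Σ_P,pop + λ M^{−1}) where Σ_P,pop ⪰ (1/B)·I, and let θ* satisfy θ*ᵀ M^{−1} θ* ≤ H². Then λ²‖(Σ_P + λM^{−1})^{−1} M^{−1} θ*‖₂² ≤ 2·λ·B·H². -/

import Mathlib

noncomputable abbrev H13 : Type := lp (fun _ : ℕ => ℝ) 2

/-!
Write `w = (Σ_P + λM⁻¹)⁻¹ M⁻¹θ*`. Pairing the defining equation `Σ_P w + λM⁻¹w = M⁻¹θ*` with `w`
and using the two lower bounds on `Σ_P + λM⁻¹` gives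
`‖w‖²/(2B) + (λ/2)⟨w, M⁻¹w⟩ ≤ ⟨w, M⁻¹θ*⟩`, while positivity of `M⁻¹` on `λw - θ*` gives
`2λ⟨w, M⁻¹θ*⟩ ≤ λ²⟨w, M⁻¹w⟩ + ⟨θ*, M⁻¹θ*⟩`. The `λ²⟨w, M⁻¹w⟩` terms cancel, leaving
`λ‖w‖²/B ≤ ⟨θ*, M⁻¹θ*⟩ ≤ H²`.
-/

open scoped InnerProductSpace

namespace LinearMap

variable {E : Type*} [NormedAddCommGroup E] [InnerProductSpace ℝ E]

theorem IsPositive.two_mul_inner_le {T : E →ₗ[ℝ] E} (hT : T.IsPositive) (x y : E) :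
    2 * ⟪x, T y⟫_ℝ ≤ ⟪x, T x⟫_ℝ + ⟪y, T y⟫_ℝ := by
  have hsymm : ⟪y, T x⟫_ℝ = ⟪x, T y⟫_ℝ := by
    rw [← hT.isSymmetric, real_inner_comm]
  have h := hT.inner_nonneg_right (x - y)
  rw [map_sub, inner_sub_left, inner_sub_right, inner_sub_right, hsymm] at h
  linarith

theorem IsPositive.mul_mul_sq_norm_le_of_add_smul_eq {T S Sig : E →ₗ[ℝ] E} (hT : T.IsPositive)
    {c lam : ℝ} (hlam : 0 ≤ lam) (hSig : ∀ v, c * ‖v‖ ^ 2 ≤ ⟪v, Sig v⟫_ℝ)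
    (hS : ∀ v, (1 / 2) * (⟪v, Sig v⟫_ℝ + lam * ⟪v, T v⟫_ℝ) ≤ ⟪v, S v⟫_ℝ + lam * ⟪v, T v⟫_ℝ)
    {w θ : E} (hw : S w + lam • T w = T θ) :
    lam * c * ‖w‖ ^ 2 ≤ ⟪θ, T θ⟫_ℝ := by
  have hpair : ⟪w, T θ⟫_ℝ = ⟪w, S w⟫_ℝ + lam * ⟪w, T w⟫_ℝ := by
    rw [← hw, inner_add_right, real_inner_smul_right]
  have hlower : c * ‖w‖ ^ 2 + lam * ⟪w, T w⟫_ℝ ≤ 2 * ⟪w, T θ⟫_ℝ := by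
    linarith [hSig w, hS w]
  have hupper : 2 * (lam * ⟪w, T θ⟫_ℝ) ≤ lam ^ 2 * ⟪w, T w⟫_ℝ + ⟪θ, T θ⟫_ℝ := by
    simpa only [map_smul, real_inner_smul_left, real_inner_smul_right, ← mul_assoc, sq]
      using hT.two_mul_inner_le (lam • w) θ
  nlinarith [mul_le_mul_of_nonneg_left hlower hlam]

end LinearMap

theorem lp.isPositive_of_apply_eq_mul {ι : Type*} {D : lp (fun _ : ι => ℝ) 2 →ₗ[ℝ] lp _ 2}
    {d : ι → ℝ} (hD : ∀ v j, D v j = d j * v j) (hd : ∀ j, 0 ≤ d j) : D.IsPositive := by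
  refine ⟨fun u v => ?_, fun u => ?_⟩
  · simp only [lp.inner_eq_tsum, hD, RCLike.inner_apply, conj_trivial]
    exact tsum_congr fun j => by ring
  · simp only [lp.inner_eq_tsum, hD, RCLike.inner_apply, conj_trivial, RCLike.re_to_real]
    exact tsum_nonneg fun j => by nlinarith [hd j, sq_nonneg (u j)]

theorem krr_bias_bound_general
    (μ : ℕ → ℝ) (B lam Hn : ℝ)
    (hμ : ∀ j, 0 < μ j) (hB : 1 ≤ B) (hlam : 0 < lam)
    (SigP Sigpop Minv Rinv : H13 →L[ℝ] H13) (θstar : H13)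
    -- M⁻¹ is the diagonal operator with entries 1/μ_j
    (hMinv : ∀ (v : H13) (j : ℕ), (Minv v) j = (μ j)⁻¹ * v j)
    -- Σ_pop is self-adjoint and Σ_pop ⪰ (1/B)·I
    (hSigpop_lb : ∀ v : H13, (1 / B) * ‖v‖ ^ 2 ≤ (inner ℝ v (Sigpop v) : ℝ))
    -- Σ_P + λM⁻¹ ⪰ ½(Σ_pop + λM⁻¹)
    (hhalf : ∀ v : H13,
      (1 / 2) * ((inner ℝ v (Sigpop v) : ℝ) + lam * (inner ℝ v (Minv v) : ℝ))
        ≤ (inner ℝ v (SigP v) : ℝ) + lam * (inner ℝ v (Minv v) : ℝ))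
    -- θ* has Hilbert norm at most H: θ*ᵀM⁻¹θ* ≤ H²
    (hθstar : (inner ℝ θstar (Minv θstar) : ℝ) ≤ Hn ^ 2)
    -- Rinv is a two-sided inverse of Σ_P + λM⁻¹
    (hRinv_right : ∀ v : H13, SigP (Rinv v) + lam • Minv (Rinv v) = v) :
    lam ^ 2 * ‖Rinv (Minv θstar)‖ ^ 2 ≤ 2 * lam * B * Hn ^ 2 := by
  have hMinv_pos : (Minv : H13 →ₗ[ℝ] H13).IsPositive :=
    lp.isPositive_of_apply_eq_mul hMinv fun j => inv_nonneg.mpr (hμ j).le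
  have hridge : lam * (1 / B) * ‖Rinv (Minv θstar)‖ ^ 2 ≤ Hn ^ 2 :=
    (hMinv_pos.mul_mul_sq_norm_le_of_add_smul_eq (S := SigP) hlam.le hSigpop_lb hhalf
      (hRinv_right (Minv θstar))).trans hθstar
  have hB0 : 0 < B := one_pos.trans_le hB
  calc lam ^ 2 * ‖Rinv (Minv θstar)‖ ^ 2
      = lam * B * (lam * (1 / B) * ‖Rinv (Minv θstar)‖ ^ 2) := by field_simp
    _ ≤ lam * B * Hn ^ 2 := by gcongr
    _ ≤ 2 * lam * B * Hn ^ 2 := by nlinarith [sq_nonneg Hn, mul_pos hlam hB0]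

/-- The bias bound T₁ ≤ 2λB·H² for kernel ridge regression under covariate shift:
if Σ_P + λM⁻¹ ⪰ ½(Σ_pop + λM⁻¹) with Σ_pop ⪰ (1/B)·I, M⁻¹ = diag(1/μ_j), and
θ* satisfies θ*ᵀM⁻¹θ* ≤ H², then λ²‖(Σ_P + λM⁻¹)⁻¹M⁻¹θ*‖² ≤ 2λBH². -/
theorem krr_bias_bound
    (μ : ℕ → ℝ) (B lam Hn : ℝ)
    (hμ : ∀ j, 0 < μ j) (hB : 1 ≤ B) (hlam : 0 < lam) (hHn : 0 ≤ Hn)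
    (SigP Sigpop Minv Rinv : H13 →L[ℝ] H13) (θstar : H13)
    -- M⁻¹ is the diagonal operator with entries 1/μ_j
    (hMinv : ∀ (v : H13) (j : ℕ), (Minv v) j = (μ j)⁻¹ * v j)
    -- Σ_P (empirical covariance) is self-adjoint and positive semidefinite
    (hSigP_sa : ∀ v w : H13, (inner ℝ (SigP v) w : ℝ) = inner ℝ v (SigP w))
    (hSigP_pos : ∀ v : H13, (0 : ℝ) ≤ inner ℝ v (SigP v))
    -- Σ_pop is self-adjoint and Σ_pop ⪰ (1/B)·I
    (hSigpop_sa : ∀ v w : H13, (inner ℝ (Sigpop v) w : ℝ) = inner ℝ v (Sigpop w))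
    (hSigpop_lb : ∀ v : H13, (1 / B) * ‖v‖ ^ 2 ≤ (inner ℝ v (Sigpop v) : ℝ))
    -- Σ_P + λM⁻¹ ⪰ ½(Σ_pop + λM⁻¹)
    (hhalf : ∀ v : H13,
      (1 / 2) * ((inner ℝ v (Sigpop v) : ℝ) + lam * (inner ℝ v (Minv v) : ℝ))
        ≤ (inner ℝ v (SigP v) : ℝ) + lam * (inner ℝ v (Minv v) : ℝ))
    -- θ* has Hilbert norm at most H: θ*ᵀM⁻¹θ* ≤ H²
    (hθstar : (inner ℝ θstar (Minv θstar) : ℝ) ≤ Hn ^ 2)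
    -- Rinv is a two-sided inverse of Σ_P + λM⁻¹
    (hRinv_left : ∀ v : H13, Rinv (SigP v + lam • Minv v) = v)
    (hRinv_right : ∀ v : H13, SigP (Rinv v) + lam • Minv (Rinv v) = v) :
    lam ^ 2 * ‖Rinv (Minv θstar)‖ ^ 2 ≤ 2 * lam * B * Hn ^ 2 :=
  krr_bias_bound_general μ B lam Hn hμ hB hlam SigP Sigpop Minv Rinv θstar hMinv hSigpop_lb hhalf
    hθstar hRinv_right
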